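/- Let X be a nonempty finite design space, let p and s be natural numbers with 0 < s and s < p, let m : X → Matrix (Fin p) (Fin p) ℝ assign to each design point a symmetric positive semidefinite matrix, and let A : Matrix (Fin p) (Fin s) ℝ have rank s. Suppose w* is a design such that M(w*) is positive definite and w* maximizes w ↦ -log(det(Aᵀ * M(w)⁻¹ * A)) over all designs with positive definite information matrix. Then for every x ∈ X with w*(x) > 0, trace(M(w*)⁻¹ * A * (Aᵀ * M(w*)⁻¹ * A)⁻¹ * Aᵀ * M(w*)⁻¹ * m(x)) = s. -/

import Mathlib

/-!
Write `M = M(w*)`, `C = Aᵀ M⁻¹ A` and `d(B) = tr (M⁻¹ A C⁻¹ Aᵀ M⁻¹ B)`, which is linear in `B`.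
Moving the design from `w*` towards the point mass at `z` moves the information matrix along
`M + t (m z - M)`. By Jacobi's formula and `(M⁻¹)' = -M⁻¹ M' M⁻¹`, the criterion has derivative
`d(m z) - s` at `t = 0`, and optimality forces this to be `≤ 0`. On the other hand
`∑ w*(y) d(m y) = d(M) = tr (C⁻¹ C) = s`, so the nonnegative numbers `s - d(m y)` have
`w*`-average zero, and `d(m y) = s` wherever `w*(y) > 0`.
-/

open Matrix

namespace Matrix

variable {𝕜 : Type*} [NontriviallyNormedField 𝕜] {l n o : Type*}

theorem mulVec_injective_of_rank_eq_card {K : Type*} [Field K] [Fintype o] {A : Matrix n o K}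
    (hA : A.rank = Fintype.card o) : Function.Injective A.mulVec := by
  have hker : Module.finrank K (LinearMap.ker A.mulVecLin) = 0 := by
    have := LinearMap.finrank_range_add_finrank_ker A.mulVecLin
    rw [← Matrix.rank, hA, Module.finrank_fintype_fun_eq_card] at this
    omega
  exact LinearMap.ker_eq_bot.mp (Submodule.finrank_eq_zero.mp hker)

theorem hasDerivAt_det_of_eq_one [Fintype n] [DecidableEq n] {H : 𝕜 → Matrix n n 𝕜}
    {H' : Matrix n n 𝕜} {t₀ : 𝕜}
    (hH : ∀ i j, HasDerivAt (fun t => H t i j) (H' i j) t₀) (hH₀ : H t₀ = 1) :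
    HasDerivAt (fun t => (H t).det) H'.trace t₀ := by
  have hprod : ∀ σ : Equiv.Perm n, σ ≠ 1 → ∀ i, ∏ j ∈ Finset.univ.erase i, H t₀ (σ j) j = 0 := by
    intro σ hσ i
    obtain ⟨j, hj, hji⟩ := Finset.exists_mem_ne (Equiv.Perm.two_le_card_support_of_ne_one hσ) i
    refine Finset.prod_eq_zero (Finset.mem_erase.2 ⟨hji, Finset.mem_univ j⟩) ?_
    rw [hH₀, one_apply_ne (Equiv.Perm.mem_support.1 hj)]
  have hdet := HasDerivAt.fun_sum fun σ (_ : σ ∈ Finset.univ) =>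
    (HasDerivAt.fun_finsetProd (u := Finset.univ) fun i _ => hH (σ i) i).const_mul
      (Equiv.Perm.sign σ : 𝕜)
  simp only [det_apply']
  refine hdet.congr_deriv ?_
  rw [Finset.sum_eq_single_of_mem 1 (Finset.mem_univ _) fun σ _ hσ => by simp [hprod σ hσ]]
  simp [hH₀, trace]

theorem hasDerivAt_mul_mul_apply [Fintype n] [Fintype o] {F : 𝕜 → Matrix n n 𝕜}
    {F' : Matrix n n 𝕜} {t₀ : 𝕜}
    (hF : ∀ i j, HasDerivAt (fun t => F t i j) (F' i j) t₀) (P : Matrix l n 𝕜) (Q : Matrix n o 𝕜)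
    (i : l) (j : o) :
    HasDerivAt (fun t => (P * F t * Q) i j) ((P * F' * Q) i j) t₀ := by
  simp only [mul_apply]
  exact HasDerivAt.fun_sum fun b _ =>
    (HasDerivAt.fun_sum fun a _ => (hF a b).const_mul (P i a)).mul_const (Q b j)

section

attribute [local instance] Matrix.linftyOpNormedRing Matrix.linftyOpNormedAlgebra

theorem hasDerivAt_inv_add_smul_apply [Fintype n] [DecidableEq n] {M : Matrix n n ℝ}
    (hM : IsUnit M) (D : Matrix n n ℝ) (i j : n) :
    HasDerivAt (fun t : ℝ => (M + t • D)⁻¹ i j) (-(M⁻¹ * D * M⁻¹) i j) 0 := by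
  obtain ⟨u, rfl⟩ := hM
  have hpath : HasDerivAt (fun t : ℝ => (u : Matrix n n ℝ) + t • D) D 0 := by
    have := ((hasDerivAt_id (0 : ℝ)).smul_const D).const_add (u : Matrix n n ℝ)
    rwa [one_smul] at this
  have hinv : HasDerivAt (fun t : ℝ => ((u : Matrix n n ℝ) + t • D)⁻¹)
      (-((u : Matrix n n ℝ)⁻¹ * D * (u : Matrix n n ℝ)⁻¹)) 0 := by
    have := (hasFDerivAt_ringInverse (𝕜 := ℝ) u).comp_hasDerivAt_of_eq 0 hpath (by simp)
    simp only [Function.comp_def, ← nonsing_inv_eq_ringInverse] at this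
    refine this.congr_deriv ?_
    simp [← coe_units_inv, mul_assoc]
  exact ((entryLinearMap ℝ ℝ i j).toContinuousLinearMap.hasFDerivAt).comp_hasDerivAt _ hinv

end

theorem PosDef.add_smul_sub [Fintype n] {M B : Matrix n n ℝ} (hM : M.PosDef) (hB : B.PosSemidef)
    {t : ℝ} (ht0 : 0 ≤ t) (ht1 : t < 1) : (M + t • (B - M)).PosDef := by
  rw [show M + t • (B - M) = (1 - t) • M + t • B by module]
  exact (hM.smul (sub_pos.2 ht1)).add_posSemidef (hB.smul ht0)

end Matrix

theorem eq_of_le_of_sum_mul_eq {ι : Type*} [Fintype ι] {w f : ι → ℝ} {c : ℝ}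
    (hw0 : ∀ i, 0 ≤ w i) (hw1 : ∑ i, w i = 1) (hf : ∀ i, f i ≤ c) (hsum : ∑ i, w i * f i = c)
    {i : ι} (hi : 0 < w i) : f i = c := by
  have hzero : ∑ j, w j * (c - f j) = 0 := by
    simp only [mul_sub, Finset.sum_sub_distrib, ← Finset.sum_mul, hw1, hsum, one_mul, sub_self]
  have hterm := (Finset.sum_eq_zero_iff_of_nonneg fun j _ =>
    mul_nonneg (hw0 j) (sub_nonneg.2 (hf j))).1 hzero i (Finset.mem_univ i)
  linarith [(mul_eq_zero.1 hterm).resolve_left hi.ne']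

namespace OptimalDesign

variable {X n k : Type*} [Fintype X]

def infoMatrix (m : X → Matrix n n ℝ) (w : X → ℝ) : Matrix n n ℝ := ∑ x, w x • m x

theorem infoMatrix_mix [DecidableEq X] (m : X → Matrix n n ℝ) (w : X → ℝ) (z : X) (t : ℝ) :
    infoMatrix m ((1 - t) • w + t • Pi.single z 1) =
      infoMatrix m w + t • (m z - infoMatrix m w) := by
  simp only [infoMatrix, Pi.add_apply, Pi.smul_apply, smul_eq_mul, add_smul, mul_smul,
    Finset.sum_add_distrib, ← Finset.smul_sum, Pi.single_apply, ite_smul, one_smul, zero_smul,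
    Finset.sum_ite_eq', Finset.mem_univ, if_true]
  module

variable [Fintype n] [DecidableEq n] [Fintype k] [DecidableEq k]

noncomputable def daCriterion (A : Matrix n k ℝ) (M : Matrix n n ℝ) : ℝ :=
  -Real.log (Aᵀ * M⁻¹ * A).det

noncomputable def daSensitivity (M : Matrix n n ℝ) (A : Matrix n k ℝ) (B : Matrix n n ℝ) : ℝ :=
  (M⁻¹ * A * (Aᵀ * M⁻¹ * A)⁻¹ * Aᵀ * M⁻¹ * B).trace

section Sensitivity

variable {M : Matrix n n ℝ} {A : Matrix n k ℝ}

theorem daSensitivity_sub (B B' : Matrix n n ℝ) :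
    daSensitivity M A (B - B') = daSensitivity M A B - daSensitivity M A B' := by
  simp only [daSensitivity, Matrix.mul_sub, Matrix.trace_sub]

theorem daSensitivity_sum_smul (m : X → Matrix n n ℝ) (w : X → ℝ) :
    daSensitivity M A (infoMatrix m w) = ∑ x, w x * daSensitivity M A (m x) := by
  simp only [daSensitivity, infoMatrix, Matrix.mul_sum, Matrix.mul_smul, Matrix.trace_sum,
    Matrix.trace_smul, smul_eq_mul]

theorem daSensitivity_self (hM : IsUnit M) (hC : IsUnit (Aᵀ * M⁻¹ * A)) :
    daSensitivity M A M = Fintype.card k := by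
  rw [daSensitivity, nonsing_inv_mul_cancel_right _ _ ((isUnit_iff_isUnit_det M).mp hM),
    trace_mul_comm, ← Matrix.mul_assoc, ← Matrix.mul_assoc,
    mul_nonsing_inv _ ((isUnit_iff_isUnit_det _).mp hC), trace_one]

theorem hasDerivAt_daCriterion_add_smul (hM : IsUnit M) (hC : IsUnit (Aᵀ * M⁻¹ * A))
    (D : Matrix n n ℝ) :
    HasDerivAt (fun t : ℝ => daCriterion A (M + t • D)) (daSensitivity M A D) 0 := by
  set C := Aᵀ * M⁻¹ * A
  have hCdet : IsUnit C.det := (isUnit_iff_isUnit_det C).mp hC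
  set H : ℝ → Matrix k k ℝ := fun t => C⁻¹ * Aᵀ * (M + t • D)⁻¹ * A
  have hH₀ : H 0 = 1 := by
    simp only [H, zero_smul, add_zero, Matrix.mul_assoc]
    rw [← Matrix.mul_assoc Aᵀ]
    exact nonsing_inv_mul C hCdet
  have hfactor : ∀ t, (Aᵀ * (M + t • D)⁻¹ * A).det = C.det * (H t).det := by
    intro t
    rw [← det_mul]
    simp only [H, Matrix.mul_assoc, mul_nonsing_inv_cancel_left _ _ hCdet]
  have hdet : HasDerivAt (fun t => (H t).det) (C⁻¹ * Aᵀ * -(M⁻¹ * D * M⁻¹) * A).trace 0 :=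
    hasDerivAt_det_of_eq_one
      (hasDerivAt_mul_mul_apply (hasDerivAt_inv_add_smul_apply hM D) (C⁻¹ * Aᵀ) A) hH₀
  have hlog := ((hdet.const_mul C.det).log (by simp [hH₀, hCdet.ne_zero])).neg
  simp only [daCriterion, hfactor]
  refine hlog.congr_deriv ?_
  rw [hH₀, det_one, mul_one, mul_div_cancel_left₀ _ hCdet.ne_zero, daSensitivity]
  rw [Matrix.mul_neg, Matrix.neg_mul, trace_neg, neg_neg, trace_mul_comm _ A]
  simp only [Matrix.mul_assoc]
  rw [trace_mul_comm M⁻¹]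
  simp only [Matrix.mul_assoc, C]

theorem daSensitivity_le_card_of_isLocalMaxOn (hM : IsUnit M) (hC : IsUnit (Aᵀ * M⁻¹ * A))
    {B : Matrix n n ℝ}
    (hmax : IsLocalMaxOn (fun t : ℝ => daCriterion A (M + t • (B - M))) (Set.Ici 0) 0) :
    daSensitivity M A B ≤ Fintype.card k := by
  have hcone : (1 : ℝ) ∈ posTangentConeAt (Set.Ici (0 : ℝ)) 0 := by
    refine mem_posTangentConeAt_of_segment_subset ?_
    rw [zero_add, segment_eq_Icc zero_le_one]
    exact Set.Icc_subset_Ici_self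
  have hnonpos := hmax.hasFDerivWithinAt_nonpos
    (hasDerivAt_daCriterion_add_smul hM hC (B - M)).hasFDerivAt.hasFDerivWithinAt hcone
  simp only [ContinuousLinearMap.toSpanSingleton_apply, smul_eq_mul, one_mul] at hnonpos
  rw [daSensitivity_sub, daSensitivity_self hM hC] at hnonpos
  linarith

end Sensitivity

theorem isLocalMaxOn_daCriterion_mix {m : X → Matrix n n ℝ} (hm : ∀ x, (m x).PosSemidef)
    (A : Matrix n k ℝ) {w : X → ℝ} (hw0 : ∀ x, 0 ≤ w x) (hw1 : ∑ x, w x = 1)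
    (hM : (infoMatrix m w).PosDef)
    (hopt : ∀ w' : X → ℝ, (∀ x, 0 ≤ w' x) → ∑ x, w' x = 1 → (infoMatrix m w').PosDef →
      daCriterion A (infoMatrix m w') ≤ daCriterion A (infoMatrix m w)) (z : X) :
    IsLocalMaxOn (fun t : ℝ => daCriterion A (infoMatrix m w + t • (m z - infoMatrix m w)))
      (Set.Ici 0) 0 := by
  classical
  filter_upwards [eventually_nhdsWithin_of_eventually_nhds (eventually_lt_nhds one_pos),
    self_mem_nhdsWithin] with t (ht1 : t < 1) (ht0 : 0 ≤ t)
  rw [zero_smul, add_zero, ← infoMatrix_mix m w z t]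
  refine hopt _ (fun x => ?_) ?_ ?_
  · exact add_nonneg (mul_nonneg (sub_nonneg.2 ht1.le) (hw0 x))
      (mul_nonneg ht0 (by rw [Pi.single_apply]; split_ifs <;> norm_num))
  · simp [Finset.sum_add_distrib, ← Finset.mul_sum, hw1]
  · rw [infoMatrix_mix]
    exact hM.add_smul_sub (hm z) ht0 ht1

end OptimalDesign

open OptimalDesign

theorem DA_sensitivity_support_points_general
    {X : Type*} [Fintype X] (p s : ℕ)
    (m : X → Matrix (Fin p) (Fin p) ℝ) (hm : ∀ x, (m x).PosSemidef)
    (A : Matrix (Fin p) (Fin s) ℝ) (hA : A.rank = s)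
    (wstar : X → ℝ) (hw0 : ∀ x, 0 ≤ wstar x) (hw1 : ∑ x, wstar x = 1)
    (hM : (∑ x, wstar x • m x).PosDef)
    (hopt : ∀ w : X → ℝ, (∀ x, 0 ≤ w x) → ∑ x, w x = 1 → (∑ x, w x • m x).PosDef →
      -Real.log (Aᵀ * (∑ x, w x • m x)⁻¹ * A).det ≤
        -Real.log (Aᵀ * (∑ x, wstar x • m x)⁻¹ * A).det) :
    ∀ x : X, 0 < wstar x →
      ((∑ y, wstar y • m y)⁻¹ * A * (Aᵀ * (∑ y, wstar y • m y)⁻¹ * A)⁻¹ * Aᵀ *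
          (∑ y, wstar y • m y)⁻¹ * m x).trace = (s : ℝ) := by
  intro x hx
  change (infoMatrix m wstar).PosDef at hM
  change daSensitivity (infoMatrix m wstar) A (m x) = s
  have hAinj : Function.Injective A.mulVec :=
    mulVec_injective_of_rank_eq_card (hA.trans (Fintype.card_fin s).symm)
  have hC : (Aᵀ * (infoMatrix m wstar)⁻¹ * A).PosDef := by
    simpa only [conjTranspose_eq_transpose_of_trivial] using
      hM.inv.conjTranspose_mul_mul_same hAinj
  have hle (z : X) : daSensitivity (infoMatrix m wstar) A (m z) ≤ s := by
    simpa only [Fintype.card_fin] using daSensitivity_le_card_of_isLocalMaxOn hM.isUnit hC.isUnit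
      (isLocalMaxOn_daCriterion_mix hm A hw0 hw1 hM hopt z)
  have hmean : ∑ y, wstar y * daSensitivity (infoMatrix m wstar) A (m y) = s := by
    rw [← daSensitivity_sum_smul, daSensitivity_self hM.isUnit hC.isUnit, Fintype.card_fin]
  exact eq_of_le_of_sum_mul_eq hw0 hw1 hle hmean hx

/-- At every support point of a `D_A`-optimal design the sensitivity function
attains its maximal value `s`. -/
theorem DA_sensitivity_support_points
    {X : Type*} [Fintype X] [Nonempty X] (p s : ℕ) (hs : 0 < s) (hsp : s < p)
    (m : X → Matrix (Fin p) (Fin p) ℝ) (hm : ∀ x, (m x).PosSemidef)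
    (A : Matrix (Fin p) (Fin s) ℝ) (hA : A.rank = s)
    (wstar : X → ℝ) (hw0 : ∀ x, 0 ≤ wstar x) (hw1 : ∑ x, wstar x = 1)
    (hM : (∑ x, wstar x • m x).PosDef)
    (hopt : ∀ w : X → ℝ, (∀ x, 0 ≤ w x) → ∑ x, w x = 1 → (∑ x, w x • m x).PosDef →
      -Real.log (Aᵀ * (∑ x, w x • m x)⁻¹ * A).det ≤
        -Real.log (Aᵀ * (∑ x, wstar x • m x)⁻¹ * A).det) :
    ∀ x : X, 0 < wstar x →
      ((∑ y, wstar y • m y)⁻¹ * A * (Aᵀ * (∑ y, wstar y • m y)⁻¹ * A)⁻¹ * Aᵀ *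
          (∑ y, wstar y • m y)⁻¹ * m x).trace = (s : ℝ) :=
  DA_sensitivity_support_points_general p s m hm A hA wstar hw0 hw1 hM hopt
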